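/- arXiv:1505.02420 — 5 statements merged into one kernel-verified Lean document; each statement's English description precedes it below -/
import Mathlib

section
/- In the translated MP system, the halt state is a fixed point of the dynamics: if at some step HALT = 1 and all instruction-pointer flags I_j and L_j are 0, then all regulators of the translated rules evaluate to 0, and hence the state at the next step equals the current state. -/
/-- The halt state is a fixed point: if `HALT = 1` and every instruction-pointer flag
`I_j` and `L_j` is `0`, then every regulator of the translated rules (each of the form
`I_j`, `max(L_j - I_{j'}, 0)`, `max(I_j - R_i, 0)`, or `I_{j'}`, using truncated
subtraction on ℕ) evaluates to `0`, and hence the EMA update leaves every value unchanged. -/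
theorem halt_state_is_fixed_point (p r : ℕ) (I L : Fin p → ℕ) (HALT : ℕ) (R : Fin r → ℕ)
    (hH : HALT = 1) (hI : ∀ j, I j = 0) (hL : ∀ j, L j = 0)
    (m : ℕ) (c : Fin m → ℤ) (φ : Fin m → ℕ)
    (hforms : ∀ t, (∃ j, φ t = I j) ∨ (∃ j j', φ t = L j - I j') ∨
      (∃ j i, φ t = I j - R i)) :
    (∀ t, φ t = 0) ∧ ∀ x : ℕ, (x : ℤ) + ∑ t, c t * (φ t : ℤ) = x := by
  have hz : ∀ t, φ t = 0 := by
    intro t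
    rcases hforms t with ⟨j, h⟩ | ⟨j, j', h⟩ | ⟨j, i, h⟩
    · simp [h, hI]
    · simp [h, hL]
    · simp [h, hI]
  refine ⟨hz, fun x => ?_⟩
  simp [hz]
end

section
/- One step of the translated INC instruction correctly simulates the register machine: if I_j = 1 is the only active instruction pointer and instruction j is INC(R_i), then after applying the rules I_j → I_{j+1} (flux I_j) and ∅ → R_i (flux I_j), the register metabolite R_i increases by exactly 1, the pointer moves to I_{j+1}, and all other registers are unchanged. -/
/-- One step of the translated `INC(R_i)` instruction correctly simulates the register
machine: if `I_j = 1` is the only active pointer, then applying `I_j → I_{j+1}` (flux `I_j`)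
and `∅ → R_i` (flux `I_j`) increments the register metabolite `R_i` by exactly 1,
moves the pointer to `I_{j+1}`, and leaves all other registers unchanged. -/
theorem inc_step_simulation (p r : ℕ) (I : Fin p → ℕ) (R : Fin r → ℕ)
    (j k : Fin p) (i : Fin r) (hjk : j ≠ k)
    (hj : I j = 1) (hother : ∀ m, m ≠ j → I m = 0) :
    let R' := Function.update R i (R i + I j)
    let I' := Function.update (Function.update I j (I j - I j)) k (I k + I j)
    R' i = R i + 1 ∧ (∀ i', i' ≠ i → R' i' = R i') ∧
      I' k = 1 ∧ (∀ m, m ≠ k → I' m = 0) := by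
  have hk : I k = 0 := hother k (Ne.symm hjk)
  refine ⟨by simp [Function.update_self, hj], fun i' hi' => by simp [Function.update_of_ne hi'],
    by simp [Function.update_self, hj, hk], fun m hm => ?_⟩
  rcases eq_or_ne m j with rfl | hmj
  · simp [Function.update_of_ne hm]
  · simp [Function.update_of_ne hm, Function.update_of_ne hmj, hother m hmj]
end

section
/- One step of the translated DEC instruction correctly simulates the register machine under the positive control: if I_j = 1 is the only active instruction pointer and instruction j is DEC(R_i), then after applying the rules R_i → ∅ (flux I_j, with the positive control forcing the flux to 0 when R_i < I_j) and I_j → I_{j+1} (flux I_j), the new value of R_i is max(R_i - 1, 0), the pointer moves to I_{j+1}, and all other registers are unchanged. -/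
/-- One step of the translated `DEC(R_i)` instruction, under positive control, correctly
simulates the register machine: if `I_j = 1` is the only active pointer, then applying
`R_i → ∅` (flux `I_j`, set to `0` by the positive control when `R_i < I_j`) and
`I_j → I_{j+1}` (flux `I_j`) yields the truncated decrement `max(R_i - 1, 0)` of `R_i`,
moves the pointer to `I_{j+1}`, and leaves all other registers unchanged. -/
theorem dec_step_simulation (p r : ℕ) (I : Fin p → ℕ) (R : Fin r → ℕ)
    (j k : Fin p) (i : Fin r) (hjk : j ≠ k)
    (hj : I j = 1) (hother : ∀ m, m ≠ j → I m = 0) :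
    let flux := if R i < I j then 0 else I j
    let R' := Function.update R i (R i - flux)
    let I' := Function.update (Function.update I j (I j - I j)) k (I k + I j)
    R' i = R i - 1 ∧ (∀ i', i' ≠ i → R' i' = R i') ∧
      I' k = 1 ∧ (∀ m, m ≠ k → I' m = 0) := by
  intro flux R' I'
  have hk : I k = 0 := hother k (Ne.symm hjk)
  refine ⟨?_, ?_, ?_, ?_⟩
  · simp only [R', flux, Function.update_self, hj]
    rcases Nat.eq_zero_or_pos (R i) with h | h
    · simp [h]
    · rw [if_neg (by omega)]
  · intro i' hi'; simp [R', Function.update_of_ne hi']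
  · simp [I', hj, hk]
  · intro m hm
    simp only [I', Function.update_of_ne hm]
    rcases eq_or_ne m j with rfl | hmj
    · simp
    · rw [Function.update_of_ne hmj]; exact hother m hmj
end

section
/- The two-step translated JNZ instruction correctly simulates the jump: starting from a state with I_j = 1 (all other pointers, all L flags, and HALT equal to 0) where instruction j is JNZ(R_i, I_k) with k ≠ j+1, after two update steps of the translated rules the resulting pointer configuration has exactly one active flag, namely I_k = 1 if R_i > 0 and I_{j+1} = 1 if R_i = 0, with all register values unchanged. -/
/-- Two-step simulation of the translated `JNZ(R_i, I_k)` instruction. Starting from a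
state where `I j = 1` and all other pointers, all `L` flags, and `HALT` are `0`, with
`k ≠ j+1` (here `jn` denotes the index `j+1`), the two update steps of the translated
rules (step A: `I_j → L_j` flux `I_j`, and `∅ → I_{j+1}` flux `max(I_j - R_i, 0)`;
step B: `L_j → I_k` flux `max(L_j - I_{j+1}, 0)`, and `L_j → ∅` flux `I_{j+1}`)
yield exactly one active flag: `I_k = 1` if `R_i > 0` and `I_{j+1} = 1` if `R_i = 0`;
all register values are unchanged (the rules do not touch the registers). -/
theorem jnz_two_step_simulation (p r : ℕ) (I L : Fin p → ℕ) (HALT : ℕ) (R : Fin r → ℕ)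
    (j jn k : Fin p) (i : Fin r) (hjn : jn ≠ j) (hk : k ≠ jn)
    (hj : I j = 1) (hother : ∀ m, m ≠ j → I m = 0) (hL : ∀ m, L m = 0) (hH : HALT = 0) :
    -- step A
    let I₁ := Function.update (Function.update I j (I j - I j)) jn (I jn + (I j - R i))
    let L₁ := Function.update L j (L j + I j)
    -- step B
    let I₂ := Function.update I₁ k (I₁ k + (L₁ j - I₁ jn))
    let L₂ := Function.update L₁ j (L₁ j - ((L₁ j - I₁ jn) + I₁ jn))
    (0 < R i → I₂ k = 1 ∧ ∀ m, m ≠ k → I₂ m = 0) ∧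
    (R i = 0 → I₂ jn = 1 ∧ ∀ m, m ≠ jn → I₂ m = 0) ∧
    (∀ m, L₂ m = 0) ∧ HALT = 0 ∧ (∀ i', R i' = R i') := by
  intro I₁ L₁ I₂ L₂
  have hIjn : I jn = 0 := hother jn hjn
  have hLj : L j = 0 := hL j
  simp only [I₂, I₁, L₁, L₂, Function.update_apply, hj, hIjn, hLj]
  refine ⟨fun hR => ⟨?_, fun m hm => ?_⟩, fun hR => ⟨?_, fun m hm => ?_⟩,
    fun m => ?_, hH, fun _ => trivial⟩ <;>
    split_ifs <;> simp_all <;> omega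
end

section
/- The translated HALT instruction terminates the simulation: if I_j = 1 is the only active flag and instruction j is HALT, then after applying rule I_j → HALT with flux I_j, the state has HALT = 1 and all instruction-pointer and L flags equal to 0, and this state is a fixed point of all subsequent update steps. -/
/-- The translated `HALT` instruction terminates the simulation: if `I_j = 1` is the only
active flag (all other `I`, all `L`, and `HALT` are `0`), then after applying the rule
`I_j → HALT` with flux `I_j`, we have `HALT = 1` and all pointer and `L` flags are `0`;
moreover this halted state is a fixed point: every regulator (each of the forms
`I_m`, `max(I_m - R_i, 0)`, `max(L_m - I_{m'}, 0)`, `I_{m'}` evaluated in the new state)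
is `0`. -/
theorem halt_step_simulation (p r : ℕ) (I L : Fin p → ℕ) (HALT : ℕ) (R : Fin r → ℕ)
    (j : Fin p) (hj : I j = 1) (hother : ∀ m, m ≠ j → I m = 0)
    (hL : ∀ m, L m = 0) (hH : HALT = 0) :
    let I' := Function.update I j (I j - I j)
    let HALT' := HALT + I j
    HALT' = 1 ∧ (∀ m, I' m = 0 ∧ L m = 0) ∧
      (∀ φ : ℕ, ((∃ m, φ = I' m) ∨ (∃ m i, φ = I' m - R i) ∨
        (∃ m m', φ = L m - I' m') ∨ (∃ m', φ = I' m')) → φ = 0) := by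
  intro I' HALT'
  have hI' : ∀ m, I' m = 0 := by
    intro m
    by_cases h : m = j
    · subst h; simp [I', Function.update_self]
    · simpa [I', Function.update_of_ne h] using hother m h
  refine ⟨by simp [HALT', hH, hj], fun m => ⟨hI' m, hL m⟩, ?_⟩
  rintro φ (⟨m, rfl⟩ | ⟨m, i, rfl⟩ | ⟨m, m', rfl⟩ | ⟨m', rfl⟩) <;>
    simp [hI', hL]
end
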